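/- arXiv:2410.21765 — 5 statements merged into one kernel-verified Lean document; each statement's English description precedes it below -/
import Mathlib

section
/- Suppose $w \in C^2[0,\pi]$ is a positive solution on $(0,\pi)$ of $-w'' = \beta^2 w + c_1 w|w|^{2/\beta} + c_2 \sin\phi\, |w|^{1+3/\beta}$ with $w(0) = w(\pi) = 0$, where $c_1, c_2 \geq 0$ and $c_1 + c_2 > 0$ and $\beta \neq 0$. Then $|\beta| < 1$. -/
open Real MeasureTheory Set

/-! Pair the equation with the principal Dirichlet eigenfunction `sin` of `-d²/dφ²` on `(0, π)`:
two integrations by parts give `∫ sin · (-w'' - β² w) = (1 - β²) ∫ sin · w`. The left side is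
positive because the nonlinear terms are, and `∫ sin · w > 0`, so `β² < 1`. -/

theorem integral_sin_mul_deriv_deriv_eq_neg {w : ℝ → ℝ} (hw : ContDiff ℝ 2 w)
    (h0 : w 0 = 0) (hπ : w π = 0) :
    ∫ x in (0)..π, sin x * deriv (deriv w) x = -∫ x in (0)..π, sin x * w x := by
  obtain ⟨hw₀, -, hw₁⟩ := (contDiff_succ_iff_deriv (n := 1)).mp (by exact_mod_cast hw)
  have hw' : Differentiable ℝ (deriv w) := hw₁.differentiable one_ne_zero
  have parts₁ := intervalIntegral.integral_mul_deriv_eq_deriv_mul (a := 0) (b := π)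
    (fun x _ => hasDerivAt_sin x) (fun x _ => (hw' x).hasDerivAt)
    (continuous_cos.intervalIntegrable _ _) ((hw₁.continuous_deriv le_rfl).intervalIntegrable _ _)
  have parts₂ := intervalIntegral.integral_mul_deriv_eq_deriv_mul (a := 0) (b := π)
    (fun x _ => hasDerivAt_cos x) (fun x _ => (hw₀ x).hasDerivAt)
    (continuous_sin.neg.intervalIntegrable _ _) (hw'.continuous.intervalIntegrable _ _)
  simp only [neg_mul, intervalIntegral.integral_neg] at parts₂
  rw [parts₁, parts₂, sin_pi, sin_zero, h0, hπ]
  ring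

theorem integral_sin_mul_pos_of_pos {f : ℝ → ℝ} (hf : Continuous f)
    (hpos : ∀ x ∈ Ioo 0 π, 0 < f x) : 0 < ∫ x in (0)..π, sin x * f x :=
  intervalIntegral.intervalIntegral_pos_of_pos_on
    ((continuous_sin.mul hf).intervalIntegrable _ _)
    (fun x hx => mul_pos (sin_pos_of_pos_of_lt_pi hx.1 hx.2) (hpos x hx)) pi_pos

theorem lt_one_of_pos_of_lt_neg_deriv_deriv {w : ℝ → ℝ} {μ : ℝ} (hw : ContDiff ℝ 2 w)
    (h0 : w 0 = 0) (hπ : w π = 0) (hpos : ∀ x ∈ Ioo 0 π, 0 < w x)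
    (hsuper : ∀ x ∈ Ioo 0 π, μ * w x < -deriv (deriv w) x) : μ < 1 := by
  have hw'' : Continuous (deriv (deriv w)) :=
    ((contDiff_succ_iff_deriv (n := 1)).mp (by exact_mod_cast hw)).2.2.continuous_deriv le_rfl
  have hgap : 0 < ∫ x in (0)..π, sin x * (-deriv (deriv w) x - μ * w x) :=
    integral_sin_mul_pos_of_pos (hw''.neg.sub (continuous_const.mul hw.continuous))
      fun x hx => sub_pos.mpr (hsuper x hx)
  have hmass : 0 < ∫ x in (0)..π, sin x * w x := integral_sin_mul_pos_of_pos hw.continuous hpos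
  have hgap_eq : ∫ x in (0)..π, sin x * (-deriv (deriv w) x - μ * w x)
      = (1 - μ) * ∫ x in (0)..π, sin x * w x := by
    have hsplit : ∀ x, sin x * (-deriv (deriv w) x - μ * w x)
        = -(sin x * deriv (deriv w) x) - μ * (sin x * w x) := fun x => by ring
    simp only [hsplit]
    rw [intervalIntegral.integral_sub (Continuous.intervalIntegrable (by fun_prop) _ _)
      (Continuous.intervalIntegrable (by fun_prop) _ _),
      intervalIntegral.integral_neg, intervalIntegral.integral_const_mul,
      integral_sin_mul_deriv_deriv_eq_neg hw h0 hπ]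
    ring
  exact sub_pos.mp (pos_of_mul_pos_left (hgap_eq ▸ hgap) hmass.le)

theorem nonlinear_term_pos {c1 c2 u s : ℝ} (a b : ℝ) (hc1 : 0 ≤ c1) (hc2 : 0 ≤ c2)
    (hc : 0 < c1 + c2) (hu : 0 < u) (hs : 0 < s) :
    0 < c1 * u * |u| ^ a + c2 * s * |u| ^ b := by
  have ha : 0 < |u| ^ a := rpow_pos_of_pos (abs_pos.mpr hu.ne') a
  have hb : 0 < |u| ^ b := rpow_pos_of_pos (abs_pos.mpr hu.ne') b
  rcases hc1.eq_or_lt with rfl | hc1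
  · have : 0 < c2 := by linarith
    positivity
  · have : 0 < c1 * u * |u| ^ a := by positivity
    positivity

theorem no_positive_solutions_for_large_beta_general (β c1 c2 : ℝ)
    (hc1 : 0 ≤ c1) (hc2 : 0 ≤ c2) (hc : 0 < c1 + c2)
    (w : ℝ → ℝ) (hw : ContDiff ℝ 2 w)
    (hpos : ∀ φ ∈ Set.Ioo (0:ℝ) Real.pi, 0 < w φ)
    (hode : ∀ φ ∈ Set.Ioo (0:ℝ) Real.pi,
      -(deriv (deriv w) φ) = β ^ 2 * w φ + c1 * w φ * |w φ| ^ (2 / β)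
        + c2 * Real.sin φ * |w φ| ^ (1 + 3 / β))
    (h0 : w 0 = 0) (hπ : w Real.pi = 0) :
    |β| < 1 := by
  refine (sq_lt_one_iff_abs_lt_one β).mp (lt_one_of_pos_of_lt_neg_deriv_deriv hw h0 hπ hpos ?_)
  intro φ hφ
  have := nonlinear_term_pos (2 / β) (1 + 3 / β) hc1 hc2 hc (hpos φ hφ)
    (sin_pos_of_pos_of_lt_pi hφ.1 hφ.2)
  linarith [hode φ hφ]

/-- If `w ∈ C²[0,π]` is a positive solution on `(0,π)` of
`-w'' = β²w + c₁ w|w|^{2/β} + c₂ sin φ |w|^{1+3/β}` with `w(0)=w(π)=0`, where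
`c₁, c₂ ≥ 0`, `c₁ + c₂ > 0` and `β ≠ 0`, then `|β| < 1`. -/
theorem no_positive_solutions_for_large_beta (β c1 c2 : ℝ) (hβ : β ≠ 0)
    (hc1 : 0 ≤ c1) (hc2 : 0 ≤ c2) (hc : 0 < c1 + c2)
    (w : ℝ → ℝ) (hw : ContDiff ℝ 2 w)
    (hpos : ∀ φ ∈ Set.Ioo (0:ℝ) Real.pi, 0 < w φ)
    (hode : ∀ φ ∈ Set.Ioo (0:ℝ) Real.pi,
      -(deriv (deriv w) φ) = β ^ 2 * w φ + c1 * w φ * |w φ| ^ (2 / β)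
        + c2 * Real.sin φ * |w φ| ^ (1 + 3 / β))
    (h0 : w 0 = 0) (hπ : w Real.pi = 0) :
    |β| < 1 :=
  no_positive_solutions_for_large_beta_general β c1 c2 hc1 hc2 hc w hw hpos hode h0 hπ
end

section
/- Let $-2 < \beta < 0$, $c_1, c_2 \geq 0$ with $(c_1,c_2) \neq (0,0)$, and set $s = -1 - 2/\beta$, $s' = -1 - 3/\beta$. Then there exists a constant $a = a(\beta, c_1, c_2) > 0$ such that, with $\varphi(\phi) = \sin 2\phi$, the subsolution inequality $-(a\varphi)'' - \beta^2(a\varphi) \leq c_1 (a\varphi)^{-s} + c_2 \sin\phi\,(a\varphi)^{-s'}$ holds for all $\phi \in (0,\pi/2)$. -/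
/-!
Since `(sin 2φ)'' = -4 sin 2φ`, the left-hand side is `(4 - β²) a sin 2φ`, with `4 - β² > 0`.
Both exponents `1 + 2/β` and `1 + 3/β` are nonpositive, so `(a sin 2φ)^q ≥ a^q`, and
`a^q = a^(q-1) a` beats the linear term `(4 - β²) a` once `a^(q-1)` is tuned to the positive
coefficient (`c₁`, or `c₂` together with `sin 2φ ≤ 2 sin φ`).
-/

open Real Set

theorem deriv_deriv_const_mul_sin_mul (a k x : ℝ) :
    deriv (deriv fun t => a * sin (k * t)) x = -(k ^ 2 * (a * sin (k * x))) := by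
  have hsin (t : ℝ) : HasDerivAt (fun t => a * sin (k * t)) (a * (cos (k * t) * k)) t :=
    (((hasDerivAt_id t).const_mul k).sin.congr_deriv (by simp)).const_mul a
  have hcos : HasDerivAt (fun t => a * (cos (k * t) * k)) (a * (-sin (k * x) * k * k)) x :=
    ((((hasDerivAt_id x).const_mul k).cos.congr_deriv (by simp)).mul_const k).const_mul a
  rw [funext fun t => (hsin t).deriv, hcos.deriv]
  ring

theorem Real.sin_two_mul_le_two_mul_sin {x : ℝ} (hx : 0 ≤ sin x) : sin (2 * x) ≤ 2 * sin x := by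
  rw [sin_two_mul]
  nlinarith [cos_le_one x]

theorem Real.sin_two_mul_mem_Ioc {x : ℝ} (hx : x ∈ Ioo 0 (π / 2)) : sin (2 * x) ∈ Ioc 0 1 :=
  ⟨sin_pos_of_pos_of_lt_pi (by linarith [hx.1]) (by linarith [hx.2]), sin_le_one _⟩

theorem exists_pos_mul_le_mul_mul_rpow {c C q : ℝ} (hc : 0 < c) (hC : 0 < C) (hq : q ≤ 0) :
    ∃ a > 0, ∀ x ∈ Ioc (0 : ℝ) 1, C * (a * x) ≤ c * x * (a * x) ^ q := by
  have hCc : 0 < C / c := div_pos hC hc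
  refine ⟨(C / c) ^ (q - 1)⁻¹, rpow_pos_of_pos hCc _, fun x ⟨hx0, hx1⟩ => ?_⟩
  set a := (C / c) ^ (q - 1)⁻¹
  have ha : 0 < a := rpow_pos_of_pos hCc _
  have hcoef : c * a ^ q = C * a := by
    have hpow : a ^ (q - 1) = C / c := by
      rw [← rpow_mul hCc.le, inv_mul_cancel₀ (by linarith), rpow_one]
    rw [rpow_sub_one ha.ne', div_eq_iff ha.ne'] at hpow
    rw [hpow]
    field_simp
  calc C * (a * x) = c * x * a ^ q := by rw [mul_right_comm c, hcoef]; ring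
    _ ≤ c * x * (a * x) ^ q := by
      refine mul_le_mul_of_nonneg_left ?_ (by positivity)
      exact rpow_le_rpow_of_nonpos (mul_pos ha hx0) (mul_le_of_le_one_right ha.le hx1) hq

theorem one_add_div_nonpos {k β : ℝ} (hβ : β < 0) (hkβ : -k ≤ β) : 1 + k / β ≤ 0 := by
  rw [one_add_div hβ.ne]
  exact div_nonpos_of_nonneg_of_nonpos (by linarith) hβ.le

theorem exists_pos_mul_le_add_rpow {c1 c2 C q1 q2 : ℝ} (hc1 : 0 ≤ c1) (hc2 : 0 ≤ c2)
    (hc : c1 ≠ 0 ∨ c2 ≠ 0) (hC : 0 < C) (hq1 : q1 ≤ 0) (hq2 : q2 ≤ 0) :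
    ∃ a > 0, ∀ x ∈ Ioc (0 : ℝ) 1, ∀ y, x ≤ 2 * y →
      C * (a * x) ≤ c1 * (a * x) ^ q1 + c2 * y * (a * x) ^ q2 := by
  rcases hc with hc1' | hc2'
  · obtain ⟨a, ha, h⟩ := exists_pos_mul_le_mul_mul_rpow (hc1.lt_of_ne' hc1') hC hq1
    refine ⟨a, ha, fun x hx y hxy => ?_⟩
    have hax : 0 < a * x := mul_pos ha hx.1
    have hy : 0 ≤ y := by linarith [hx.1]
    calc C * (a * x) ≤ c1 * x * (a * x) ^ q1 := h x hx
      _ ≤ c1 * (a * x) ^ q1 := by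
          rw [mul_right_comm]
          exact mul_le_of_le_one_right (by positivity) hx.2
      _ ≤ _ := le_add_of_nonneg_right (by positivity)
  · obtain ⟨a, ha, h⟩ := exists_pos_mul_le_mul_mul_rpow (half_pos (hc2.lt_of_ne' hc2')) hC hq2
    refine ⟨a, ha, fun x hx y hxy => ?_⟩
    have hax : 0 < a * x := mul_pos ha hx.1
    calc C * (a * x) ≤ c2 / 2 * x * (a * x) ^ q2 := h x hx
      _ ≤ c2 * y * (a * x) ^ q2 := by
          have := mul_le_mul_of_nonneg_left hxy hc2
          gcongr ?_ * _
          linarith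
      _ ≤ _ := le_add_of_nonneg_left (by positivity)

/-- Subsolution property: for `-2 < β < 0`, `c₁, c₂ ≥ 0` not both zero, with
`s = -1-2/β`, `s' = -1-3/β` and `φ ↦ sin 2φ`, there is `a > 0` with
`-(a sin 2φ)'' - β²(a sin 2φ) ≤ c₁ (a sin 2φ)^{-s} + c₂ sin φ (a sin 2φ)^{-s'}`
on `(0,π/2)`.  (Note `-s = 1 + 2/β` and `-s' = 1 + 3/β`.) -/
theorem subsolution_exists (β c1 c2 : ℝ) (hβ1 : -2 < β) (hβ2 : β < 0)
    (hc1 : 0 ≤ c1) (hc2 : 0 ≤ c2) (hc : c1 ≠ 0 ∨ c2 ≠ 0) :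
    ∃ a > (0:ℝ), ∀ φ ∈ Set.Ioo (0:ℝ) (Real.pi/2),
      -(deriv (deriv (fun t => a * Real.sin (2*t))) φ) - β ^ 2 * (a * Real.sin (2*φ))
        ≤ c1 * (a * Real.sin (2*φ)) ^ (1 + 2/β)
          + c2 * Real.sin φ * (a * Real.sin (2*φ)) ^ (1 + 3/β) := by
  have hC : 0 < 4 - β ^ 2 := by nlinarith
  obtain ⟨a, ha, h⟩ := exists_pos_mul_le_add_rpow hc1 hc2 hc hC
    (one_add_div_nonpos (k := 2) hβ2 hβ1.le) (one_add_div_nonpos (k := 3) hβ2 (by linarith))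
  refine ⟨a, ha, fun φ hφ => ?_⟩
  have hsinφ : 0 ≤ sin φ := sin_nonneg_of_nonneg_of_le_pi hφ.1.le (by linarith [hφ.2, pi_pos])
  have := h _ (sin_two_mul_mem_Ioc hφ) _ (sin_two_mul_le_two_mul_sin hsinφ)
  rw [deriv_deriv_const_mul_sin_mul]
  linarith
end

section
/- Let $-2 < \beta < 0$, $c_1, c_2 \geq 0$, and let $\sigma$ satisfy $\beta^2/4 < \sigma \leq \min\{1, -2\beta/3\}$ with $\sigma \neq 1$. Set $s = -1-2/\beta$, $s' = -1-3/\beta$, and $\varphi(\phi) = \sin 2\phi$. Then there exists $b = b(\beta, c_1, c_2, \sigma) > 0$ such that the supersolution inequality $-(b\varphi^\sigma)'' - \beta^2 (b\varphi^\sigma) \geq c_1 (b\varphi^\sigma)^{-s} + c_2 \sin\phi\, (b\varphi^\sigma)^{-s'}$ holds for all $\phi \in (0,\pi/2)$. -/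
/-! With `u = sin 2φ` one has `-(u^σ)'' - β² u^σ = 4σ(1-σ)(1-u²) u^(σ-2) + (4σ-β²) u^σ`, which is at
least `m u^(σ-2)` with `m = min (4σ(1-σ)) (4σ-β²) > 0`. Since `u ≤ 1` and `σ ≤ -2β/3`, the
nonlinear terms evaluated at `b u^σ` are at most `b^(1+2/β) u^(σ-2)` and `b^(1+3/β) u^(σ-2)`;
as `2/β, 3/β < 0`, the remaining factors `b^(2/β)`, `b^(3/β)` are small once `b` is large. -/

open Real Filter

lemma hasDerivAt_two_mul (t : ℝ) : HasDerivAt (fun t : ℝ => 2 * t) 2 t := by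
  simpa using (hasDerivAt_id' t).const_mul 2

lemma hasDerivAt_sin_two_mul_rpow (σ : ℝ) {t : ℝ} (ht : sin (2 * t) ≠ 0) :
    HasDerivAt (fun t => sin (2 * t) ^ σ) (2 * σ * cos (2 * t) * sin (2 * t) ^ (σ - 1)) t := by
  convert (hasDerivAt_two_mul t).sin.rpow_const (p := σ) (Or.inl ht) using 1
  ring

lemma deriv_deriv_sin_two_mul_rpow (σ : ℝ) {t : ℝ} (ht : sin (2 * t) ≠ 0) :
    deriv (deriv fun t => sin (2 * t) ^ σ) t
      = 4 * σ * (σ - 1) * cos (2 * t) ^ 2 * sin (2 * t) ^ (σ - 2) - 4 * σ * sin (2 * t) ^ σ := by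
  have hne : ∀ᶠ s in nhds t, sin (2 * s) ≠ 0 :=
    (continuous_sin.comp (continuous_const_mul 2)).continuousAt.eventually_ne ht
  have hderiv : deriv (fun t => sin (2 * t) ^ σ)
      =ᶠ[nhds t] fun s => 2 * σ * cos (2 * s) * sin (2 * s) ^ (σ - 1) :=
    hne.mono fun s hs => (hasDerivAt_sin_two_mul_rpow σ hs).deriv
  have hcos := (hasDerivAt_two_mul t).cos.const_mul (2 * σ)
  have hsin := (hasDerivAt_two_mul t).sin.rpow_const (p := σ - 1) (Or.inl ht)
  have h : HasDerivAt (fun s => 2 * σ * cos (2 * s) * sin (2 * s) ^ (σ - 1)) _ t := hcos.mul hsin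
  rw [hderiv.deriv_eq, h.deriv]
  set u := sin (2 * t)
  have h1 : u ^ (σ - 1) = u ^ (σ - 2) * u := by rw [← rpow_add_one ht]; ring_nf
  have h0 : u ^ σ = u ^ (σ - 2) * u * u := by rw [← h1, ← rpow_add_one ht]; ring_nf
  rw [h0, h1, show σ - 1 - 1 = σ - 2 by ring]
  ring

lemma min_mul_rpow_sub_two_le {u : ℝ} (hu : 0 < u) (hu1 : u ≤ 1) (A B σ : ℝ) :
    min A B * u ^ (σ - 2) ≤ A * (1 - u ^ 2) * u ^ (σ - 2) + B * u ^ σ := by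
  have hsplit : u ^ σ = u ^ (σ - 2) * u ^ 2 := by
    rw [← rpow_natCast, ← rpow_add hu]; norm_num
  have hu2 : u ^ 2 ≤ 1 := pow_le_one₀ hu.le hu1
  have hmin : min A B ≤ A * (1 - u ^ 2) + B * u ^ 2 := by
    nlinarith [min_le_left A B, min_le_right A B, sq_nonneg u]
  rw [hsplit]
  nlinarith [rpow_pos_of_pos hu (σ - 2)]

lemma sub_two_le_mul_one_add_div {β σ k : ℝ} (hβ : β < 0) (h : k * σ ≤ -2 * β) :
    σ - 2 ≤ σ * (1 + k / β) := by
  have : -2 ≤ σ * k / β := by rw [le_div_iff_of_neg hβ]; linarith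
  rw [mul_add, mul_div_assoc']
  linarith

lemma mul_rpow_rpow_le {u b p q σ : ℝ} (hu : 0 < u) (hu1 : u ≤ 1) (hb : 0 ≤ b)
    (h : q ≤ σ * p) : (b * u ^ σ) ^ p ≤ b ^ p * u ^ q := by
  rw [mul_rpow hb (rpow_nonneg hu.le σ), ← rpow_mul hu.le]
  exact mul_le_mul_of_nonneg_left (rpow_le_rpow_of_exponent_ge hu hu1 h) (rpow_nonneg hb p)

lemma eventually_mul_rpow_add_mul_rpow_lt (c₁ c₂ : ℝ) {p q m : ℝ} (hp : p < 0) (hq : q < 0)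
    (hm : 0 < m) : ∀ᶠ b in atTop, c₁ * b ^ p + c₂ * b ^ q < m := by
  have h := ((tendsto_rpow_neg_atTop (neg_pos.2 hp)).const_mul c₁).add
    ((tendsto_rpow_neg_atTop (neg_pos.2 hq)).const_mul c₂)
  simp only [neg_neg, mul_zero, add_zero] at h
  exact h.eventually_lt_const hm

lemma min_mul_le_neg_deriv_deriv_sin_two_mul_rpow {b σ β φ : ℝ} (hb : 0 ≤ b)
    (hu : 0 < sin (2 * φ)) :
    b * sin (2 * φ) ^ (σ - 2) * min (4 * σ * (1 - σ)) (4 * σ - β ^ 2)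
      ≤ -(deriv (deriv fun t => b * sin (2 * t) ^ σ) φ) - β ^ 2 * (b * sin (2 * φ) ^ σ) := by
  have hlow := min_mul_rpow_sub_two_le hu (sin_le_one _) (4 * σ * (1 - σ)) (4 * σ - β ^ 2) σ
  simp only [deriv_const_mul_field']
  rw [deriv_deriv_sin_two_mul_rpow σ hu.ne', cos_sq']
  nlinarith

lemma mul_rpow_add_mul_rpow_le {b u s β σ c₁ c₂ : ℝ} (hb : 0 < b) (hu : 0 < u) (hu1 : u ≤ 1)
    (hs : s ≤ 1) (hc₁ : 0 ≤ c₁) (hc₂ : 0 ≤ c₂) (hβ : β < 0)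
    (hσβ : 3 * σ ≤ -2 * β) :
    c₁ * (b * u ^ σ) ^ (1 + 2 / β) + c₂ * s * (b * u ^ σ) ^ (1 + 3 / β)
      ≤ b * u ^ (σ - 2) * (c₁ * b ^ (2 / β) + c₂ * b ^ (3 / β)) := by
  have hr1 : (b * u ^ σ) ^ (1 + 2 / β) ≤ b ^ (1 + 2 / β) * u ^ (σ - 2) :=
    mul_rpow_rpow_le hu hu1 hb.le (sub_two_le_mul_one_add_div hβ (by linarith))
  have hr2 : (b * u ^ σ) ^ (1 + 3 / β) ≤ b ^ (1 + 3 / β) * u ^ (σ - 2) :=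
    mul_rpow_rpow_le hu hu1 hb.le (sub_two_le_mul_one_add_div hβ hσβ)
  have hs' : s * (b * u ^ σ) ^ (1 + 3 / β) ≤ (b * u ^ σ) ^ (1 + 3 / β) :=
    mul_le_of_le_one_left (rpow_nonneg (by positivity) _) hs
  calc c₁ * (b * u ^ σ) ^ (1 + 2 / β) + c₂ * s * (b * u ^ σ) ^ (1 + 3 / β)
      ≤ c₁ * (b ^ (1 + 2 / β) * u ^ (σ - 2)) + c₂ * (b ^ (1 + 3 / β) * u ^ (σ - 2)) := by
        rw [mul_assoc c₂]
        exact add_le_add (mul_le_mul_of_nonneg_left hr1 hc₁)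
          (mul_le_mul_of_nonneg_left (hs'.trans hr2) hc₂)
    _ = b * u ^ (σ - 2) * (c₁ * b ^ (2 / β) + c₂ * b ^ (3 / β)) := by
        rw [rpow_add hb, rpow_add hb, rpow_one]; ring

theorem supersolution_exists_general (β c1 c2 σ : ℝ) (hβ2 : β < 0)
    (hc1 : 0 ≤ c1) (hc2 : 0 ≤ c2)
    (hσ1 : β ^ 2 / 4 < σ) (hσ2 : σ ≤ min 1 (-2*β/3)) (hσ3 : σ ≠ 1) :
    ∃ b > (0:ℝ), ∀ φ ∈ Set.Ioo (0:ℝ) (Real.pi/2),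
      -(deriv (deriv (fun t => b * Real.sin (2*t) ^ σ)) φ)
          - β ^ 2 * (b * Real.sin (2*φ) ^ σ)
        ≥ c1 * (b * Real.sin (2*φ) ^ σ) ^ (1 + 2/β)
          + c2 * Real.sin φ * (b * Real.sin (2*φ) ^ σ) ^ (1 + 3/β) := by
  have hσ0 : 0 < σ := by nlinarith
  have hσlt1 : σ < 1 := lt_of_le_of_ne (hσ2.trans (min_le_left _ _)) hσ3
  have hσβ : σ ≤ -2 * β / 3 := hσ2.trans (min_le_right _ _)
  have hm : 0 < min (4 * σ * (1 - σ)) (4 * σ - β ^ 2) := lt_min (by nlinarith) (by linarith)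
  obtain ⟨b, hsmall, hb⟩ := ((eventually_mul_rpow_add_mul_rpow_lt c1 c2
    (div_neg_of_pos_of_neg two_pos hβ2) (div_neg_of_pos_of_neg three_pos hβ2) hm).and
    (eventually_gt_atTop 0)).exists
  refine ⟨b, hb, fun φ hφ => ?_⟩
  have hu : 0 < sin (2 * φ) := sin_pos_of_pos_of_lt_pi (by linarith [hφ.1]) (by linarith [hφ.2])
  calc c1 * (b * sin (2 * φ) ^ σ) ^ (1 + 2 / β) + c2 * sin φ * (b * sin (2 * φ) ^ σ) ^ (1 + 3 / β)
      ≤ b * sin (2 * φ) ^ (σ - 2) * (c1 * b ^ (2 / β) + c2 * b ^ (3 / β)) :=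
        mul_rpow_add_mul_rpow_le hb hu (sin_le_one _) (sin_le_one φ) hc1 hc2 hβ2
          (by linarith)
    _ ≤ b * sin (2 * φ) ^ (σ - 2) * min (4 * σ * (1 - σ)) (4 * σ - β ^ 2) :=
        mul_le_mul_of_nonneg_left hsmall.le (by positivity)
    _ ≤ _ := min_mul_le_neg_deriv_deriv_sin_two_mul_rpow hb.le hu

/-- Supersolution property: for `-2 < β < 0`, `c₁, c₂ ≥ 0`, and
`β²/4 < σ ≤ min{1, -2β/3}` with `σ ≠ 1`, there is `b > 0` with
`-(b(sin 2φ)^σ)'' - β² b(sin 2φ)^σ ≥ c₁ (b(sin 2φ)^σ)^{-s} + c₂ sin φ (b(sin 2φ)^σ)^{-s'}`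
on `(0,π/2)`, where `s = -1-2/β`, `s' = -1-3/β` (so `-s = 1+2/β`, `-s' = 1+3/β`). -/
theorem supersolution_exists (β c1 c2 σ : ℝ) (hβ1 : -2 < β) (hβ2 : β < 0)
    (hc1 : 0 ≤ c1) (hc2 : 0 ≤ c2)
    (hσ1 : β ^ 2 / 4 < σ) (hσ2 : σ ≤ min 1 (-2*β/3)) (hσ3 : σ ≠ 1) :
    ∃ b > (0:ℝ), ∀ φ ∈ Set.Ioo (0:ℝ) (Real.pi/2),
      -(deriv (deriv (fun t => b * Real.sin (2*t) ^ σ)) φ)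
          - β ^ 2 * (b * Real.sin (2*φ) ^ σ)
        ≥ c1 * (b * Real.sin (2*φ) ^ σ) ^ (1 + 2/β)
          + c2 * Real.sin φ * (b * Real.sin (2*φ) ^ σ) ^ (1 + 3/β) :=
  supersolution_exists_general β c1 c2 σ hβ2 hc1 hc2 hσ1 hσ2 hσ3
end

section
/- Rigidity for $0 < \alpha < 1$ with zero density: Suppose $(a,f,\Pi) \in C^1[0,\pi]$ satisfy $(1-\alpha)f + a' = 0$ and $a\Pi' = 2\alpha f\Pi$ on $(0,\pi)$ with $a(0) = a(\pi) = 0$, where $0 < \alpha < 1$. Then $a\Pi \equiv 0$ on $[0,\pi]$. -/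
open Real Set

/-!
With `γ = α / (1 - α)`, the equations give `a Π' + 2γ a' Π = 0`, so `g = Π (a²)^γ` is locally
constant wherever `aΠ ≠ 0`. Since `γ > 0`, `g` is continuous and vanishes exactly where `aΠ` does.
Starting from the zero `g 0 = 0`, the mean value theorem applied from the last zero of `g`
before a point shows that `g` can never become nonzero.
-/

theorem eq_zero_of_hasDerivAt_zero_of_ne_zero {g : ℝ → ℝ} {a b : ℝ} (hab : a ≤ b)
    (hg : ContinuousOn g (Icc a b)) (ha : g a = 0)
    (hderiv : ∀ x ∈ Ioo a b, g x ≠ 0 → HasDerivAt g 0 x) : g b = 0 := by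
  by_contra hb
  set S := Icc a b ∩ g ⁻¹' {0}
  have hS : IsCompact S :=
    isCompact_Icc.of_isClosed_subset
      (hg.preimage_isClosed_of_isClosed isClosed_Icc isClosed_singleton) inter_subset_left
  obtain ⟨⟨hac, hcb⟩, hgc⟩ : sSup S ∈ S := hS.sSup_mem ⟨a, ⟨le_rfl, hab⟩, ha⟩
  set c := sSup S
  have hcb' : c < b := hcb.lt_of_ne fun h => hb (h ▸ hgc)
  have hne : ∀ x ∈ Ioo c b, g x ≠ 0 := fun x hx hx0 =>
    hx.1.not_ge (le_csSup hS.bddAbove ⟨⟨hac.trans hx.1.le, hx.2.le⟩, hx0⟩)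
  obtain ⟨ξ, -, hξ⟩ := exists_hasDerivAt_eq_slope g (fun _ => 0) hcb'
    (hg.mono (Icc_subset_Icc_left hac))
    fun x hx => hderiv x ⟨hac.trans_lt hx.1, hx.2⟩ (hne x hx)
  rw [eq_comm, div_eq_zero_iff, sub_eq_zero, sub_eq_zero] at hξ
  exact hξ.elim (fun h => hb (h.trans hgc)) hcb'.ne'

theorem hasDerivAt_mul_rpow_sq_eq_zero {a P : ℝ → ℝ} {a' P' γ x : ℝ}
    (ha : HasDerivAt a a' x) (hP : HasDerivAt P P' x) (hax : a x ≠ 0)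
    (h : a x * P' + 2 * γ * a' * P x = 0) :
    HasDerivAt (fun y => P y * (a y ^ 2) ^ γ) 0 x := by
  have hsq : a x ^ 2 ≠ 0 := by positivity
  refine (hP.mul ((ha.pow 2).rpow_const (p := γ) (Or.inl hsq))).congr_deriv ?_
  have hsplit : (a x ^ 2) ^ γ = (a x ^ 2) ^ (γ - 1) * a x ^ 2 := by
    rw [← rpow_add_one hsq, sub_add_cancel]
  simp only [Pi.pow_apply, Nat.cast_ofNat, Nat.add_one_sub_one, pow_one]
  rw [hsplit]
  linear_combination (a x ^ 2) ^ (γ - 1) * a x * h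

theorem mul_rpow_sq_eq_zero_iff {γ : ℝ} (hγ : γ ≠ 0) (a p : ℝ) :
    p * (a ^ 2) ^ γ = 0 ↔ a * p = 0 := by
  rw [mul_comm a, mul_eq_zero, mul_eq_zero, rpow_eq_zero_iff_of_nonneg (sq_nonneg a)]
  simp [hγ]

theorem rigidity_aPi_vanishes_general (α : ℝ) (hα0 : 0 < α) (hα1 : α < 1)
    (a f Pbern : ℝ → ℝ)
    (ha : ContDiff ℝ 1 a) (hPbern : ContDiff ℝ 1 Pbern)
    (h1 : ∀ φ ∈ Set.Ioo (0:ℝ) Real.pi, (1-α) * f φ + deriv a φ = 0)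
    (h2 : ∀ φ ∈ Set.Ioo (0:ℝ) Real.pi, a φ * deriv Pbern φ = 2*α * f φ * Pbern φ)
    (ha0 : a 0 = 0) :
    ∀ φ ∈ Set.Icc (0:ℝ) Real.pi, a φ * Pbern φ = 0 := by
  set γ := α / (1 - α)
  have hγ : 0 < γ := div_pos hα0 (sub_pos.2 hα1)
  have hγα : γ * (1 - α) = α := div_mul_cancel₀ α (sub_pos.2 hα1).ne'
  have haD := ha.differentiable one_ne_zero
  have hPD := hPbern.differentiable one_ne_zero
  have hg : Continuous fun x => Pbern x * (a x ^ 2) ^ γ :=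
    hPD.continuous.mul ((ha.continuous.pow 2).rpow_const fun _ => Or.inr hγ.le)
  have hg' : ∀ x ∈ Ioo 0 π, Pbern x * (a x ^ 2) ^ γ ≠ 0 →
      HasDerivAt (fun y => Pbern y * (a y ^ 2) ^ γ) 0 x := by
    intro x hx hgx
    refine hasDerivAt_mul_rpow_sq_eq_zero (haD x).hasDerivAt (hPD x).hasDerivAt
      (left_ne_zero_of_mul ((mul_rpow_sq_eq_zero_iff hγ.ne' _ _).not.1 hgx)) ?_
    linear_combination h2 x hx + 2 * γ * Pbern x * h1 x hx - 2 * f x * Pbern x * hγα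
  intro φ hφ
  rw [← mul_rpow_sq_eq_zero_iff hγ.ne']
  refine eq_zero_of_hasDerivAt_zero_of_ne_zero (g := fun y => Pbern y * (a y ^ 2) ^ γ) hφ.1
    hg.continuousOn (by simp [ha0, hγ.ne']) fun x hx => hg' x ⟨hx.1, hx.2.trans_le hφ.2⟩

/-- Rigidity for `0 < α < 1` with zero density: if `(a, f, Pbern)` are `C¹` on `[0,π]`,
satisfy `(1-α)f + a' = 0` and `aPbern' = 2α f Pbern` on `(0,π)`, and `a(0)=a(π)=0`,
then `aPbern ≡ 0` on `[0,π]`. -/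
theorem rigidity_aPi_vanishes (α : ℝ) (hα0 : 0 < α) (hα1 : α < 1)
    (a f Pbern : ℝ → ℝ)
    (ha : ContDiff ℝ 1 a) (hf : ContDiff ℝ 1 f) (hPbern : ContDiff ℝ 1 Pbern)
    (h1 : ∀ φ ∈ Set.Ioo (0:ℝ) Real.pi, (1-α) * f φ + deriv a φ = 0)
    (h2 : ∀ φ ∈ Set.Ioo (0:ℝ) Real.pi, a φ * deriv Pbern φ = 2*α * f φ * Pbern φ)
    (ha0 : a 0 = 0) (haπ : a Real.pi = 0) :
    ∀ φ ∈ Set.Icc (0:ℝ) Real.pi, a φ * Pbern φ = 0 :=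
  rigidity_aPi_vanishes_general α hα0 hα1 a f Pbern ha hPbern h1 h2 ha0
end

section
/- Scale-invariant Boussinesq rigidity ($\alpha = 1$): Suppose $f, \Pi, \rho \in C^1[0,\pi]$ satisfy $2\Pi = 3\sin\phi\,\rho$ and $-ff' + \Pi' = \sin\phi\,\rho'$ on $(0,\pi)$, together with the first-integral conditions $f\rho = 0$ and $f\Pi = 0$ on $(0,\pi)$, and the boundary conditions $\rho(0) = \rho(\pi) = 0$. Then $\rho \equiv 0$, $\Pi \equiv 0$, and $f$ is constant. -/
/-!
Wherever `f ≠ 0`, the first integrals force `ρ` and `Π` to vanish on a neighbourhood, so their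
derivatives vanish and the momentum equation reduces to `f f' = 0`; trivially this also holds
where `f = 0`. Hence `f²` is constant on `(0, π)`, so `f` vanishes either identically or nowhere
there. If nowhere, then `ρ = Π = 0` and `f' = 0`. If identically, differentiating
`2Π = 3 sin φ ρ` turns the momentum equation into `3 cos φ ρ + sin φ ρ' = 0`, i.e.
`(ρ sin³ φ)' = 0`, and `ρ(0) = 0` gives `ρ ≡ 0`. Everything extends from `(0, π)` to `[0, π]`
by continuity.
-/

open Real Set Topology

lemma Set.EqOn.Icc_of_Ioo {a b : ℝ} (hab : a ≠ b) {g h : ℝ → ℝ}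
    (hg : ContinuousOn g (Icc a b)) (hh : ContinuousOn h (Icc a b)) (H : EqOn g h (Ioo a b)) :
    EqOn g h (Icc a b) :=
  H.of_subset_closure hg hh Ioo_subset_Icc_self (closure_Ioo hab).superset

lemma exists_eqOn_Icc_const_of_deriv_eq_zero {a b : ℝ} (hab : a < b) {g : ℝ → ℝ}
    (hg : ContinuousOn g (Icc a b)) (hd : DifferentiableOn ℝ g (Ioo a b))
    (h : EqOn (deriv g) 0 (Ioo a b)) : ∃ c, EqOn g (fun _ ↦ c) (Icc a b) := by
  obtain ⟨c, hc⟩ := isOpen_Ioo.exists_is_const_of_deriv_eq_zero isPreconnected_Ioo hd h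
  exact ⟨c, Set.EqOn.Icc_of_Ioo hab.ne hg continuousOn_const hc⟩

lemma deriv_eq_zero_of_mul_eq_zero {s : Set ℝ} (hs : IsOpen s) {f g : ℝ → ℝ}
    (hfg : ∀ x ∈ s, f x * g x = 0) {x : ℝ} (hx : x ∈ s) (hf : ContinuousAt f x)
    (hfx : f x ≠ 0) : deriv g x = 0 := by
  have hg : g =ᶠ[𝓝 x] fun _ ↦ 0 := by
    filter_upwards [hs.mem_nhds hx, hf.eventually_ne hfx] with y hys hfy
    exact (mul_eq_zero.mp (hfg y hys)).resolve_left hfy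
  rw [hg.deriv_eq, deriv_const]

lemma eq_zero_or_ne_zero_of_mul_deriv_eq_zero {s : Set ℝ} (hs : IsOpen s)
    (hs' : IsPreconnected s) {f : ℝ → ℝ} (hf : DifferentiableOn ℝ f s)
    (h : ∀ x ∈ s, f x * deriv f x = 0) : (∀ x ∈ s, f x = 0) ∨ ∀ x ∈ s, f x ≠ 0 := by
  by_contra! ⟨⟨x, hx, hfx⟩, y, hy, hfy⟩
  have hsq : EqOn (deriv fun z ↦ f z ^ 2) 0 s := fun z hz ↦ by
    rw [(((hf z hz).differentiableAt (hs.mem_nhds hz)).hasDerivAt.fun_pow 2).deriv]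
    simpa using mul_eq_zero.mp (h z hz)
  have hxy : f x ^ 2 = f y ^ 2 := hs.is_const_of_deriv_eq_zero hs' (hf.pow 2) hsq hx hy
  simp [hfx, hfy] at hxy

lemma two_mul_deriv_eq_of_two_mul_eq_three_sin_mul {s : Set ℝ} (hs : IsOpen s)
    {P ρ : ℝ → ℝ} (h : ∀ x ∈ s, 2 * P x = 3 * sin x * ρ x) {x : ℝ} (hx : x ∈ s)
    (hρ : DifferentiableAt ℝ ρ x) :
    2 * deriv P x = 3 * (cos x * ρ x + sin x * deriv ρ x) := by
  have hP : P =ᶠ[𝓝 x] fun y ↦ 3 / 2 * sin y * ρ y := by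
    filter_upwards [hs.mem_nhds hx] with y hy
    linarith [h y hy]
  have hd := ((hasDerivAt_sin x).const_mul (3 / 2)).mul hρ.hasDerivAt
  rw [(hd.congr_of_eventuallyEq hP).deriv]
  ring

lemma eqOn_zero_of_three_cos_mul_add_sin_mul_deriv_eq_zero {ρ : ℝ → ℝ}
    (hρ : Differentiable ℝ ρ) (h : ∀ x ∈ Ioo 0 π, 3 * cos x * ρ x + sin x * deriv ρ x = 0)
    (h0 : ρ 0 = 0) : EqOn ρ 0 (Ioo 0 π) := by
  have hd : ∀ x, HasDerivAt (fun y ↦ ρ y * sin y ^ 3)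
      (sin x ^ 2 * (3 * cos x * ρ x + sin x * deriv ρ x)) x := fun x ↦
    ((hρ x).hasDerivAt.fun_mul ((hasDerivAt_sin x).fun_pow 3)).congr_deriv (by ring)
  obtain ⟨c, hc⟩ := exists_eqOn_Icc_const_of_deriv_eq_zero (g := fun y ↦ ρ y * sin y ^ 3)
    pi_pos (hρ.continuous.mul (continuous_sin.pow 3)).continuousOn
    (fun x _ ↦ (hd x).differentiableAt.differentiableWithinAt)
    (fun x hx ↦ by rw [(hd x).deriv, h x hx, mul_zero]; rfl)
  have hc0 : c = 0 := by simpa [h0] using (hc (left_mem_Icc.mpr pi_pos.le)).symm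
  intro x hx
  have hsin : sin x ^ 3 ≠ 0 := pow_ne_zero 3 (sin_pos_of_pos_of_lt_pi hx.1 hx.2).ne'
  have hρsin : ρ x * sin x ^ 3 = c := hc (Ioo_subset_Icc_self hx)
  exact (mul_eq_zero.mp (hρsin.trans hc0)).resolve_right hsin

theorem scale_invariant_rigidity_general (f Pbern ρ : ℝ → ℝ)
    (hf : ContDiff ℝ 1 f) (hPbern : ContDiff ℝ 1 Pbern) (hρ : ContDiff ℝ 1 ρ)
    (h1 : ∀ φ ∈ Set.Ioo (0:ℝ) Real.pi, 2 * Pbern φ = 3 * Real.sin φ * ρ φ)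
    (h2 : ∀ φ ∈ Set.Ioo (0:ℝ) Real.pi,
      -(f φ * deriv f φ) + deriv Pbern φ = Real.sin φ * deriv ρ φ)
    (h3 : ∀ φ ∈ Set.Ioo (0:ℝ) Real.pi, f φ * ρ φ = 0)
    (h4 : ∀ φ ∈ Set.Ioo (0:ℝ) Real.pi, f φ * Pbern φ = 0)
    (hρ0 : ρ 0 = 0) :
    (∀ φ ∈ Set.Icc (0:ℝ) Real.pi, ρ φ = 0) ∧
    (∀ φ ∈ Set.Icc (0:ℝ) Real.pi, Pbern φ = 0) ∧
    (∃ C : ℝ, ∀ φ ∈ Set.Icc (0:ℝ) Real.pi, f φ = C) := by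
  have hfd := hf.differentiable one_ne_zero
  have hρd := hρ.differentiable one_ne_zero
  have extend {g : ℝ → ℝ} (hg : ContDiff ℝ 1 g) (c : ℝ)
      (H : EqOn g (fun _ ↦ c) (Ioo 0 π)) :=
    H.Icc_of_Ioo pi_pos.ne hg.continuous.continuousOn continuousOn_const
  have hff' : ∀ φ ∈ Ioo 0 π, f φ * deriv f φ = 0 := fun φ hφ ↦ by
    by_cases hfφ : f φ = 0
    · simp [hfφ]
    have hfc := hfd.continuous.continuousAt (x := φ)
    have := h2 φ hφ
    rw [deriv_eq_zero_of_mul_eq_zero isOpen_Ioo h3 hφ hfc hfφ,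
      deriv_eq_zero_of_mul_eq_zero isOpen_Ioo h4 hφ hfc hfφ] at this
    linarith
  rcases eq_zero_or_ne_zero_of_mul_deriv_eq_zero isOpen_Ioo isPreconnected_Ioo
    hfd.differentiableOn hff' with hf0 | hfne
  · have hρ0' : EqOn ρ 0 (Ioo 0 π) := by
      refine eqOn_zero_of_three_cos_mul_add_sin_mul_deriv_eq_zero hρd (fun φ hφ ↦ ?_) hρ0
      have := two_mul_deriv_eq_of_two_mul_eq_three_sin_mul isOpen_Ioo h1 hφ (hρd φ)
      linarith [h2 φ hφ, hff' φ hφ]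
    have hP0 : EqOn Pbern 0 (Ioo 0 π) := fun φ hφ ↦ by simpa [hρ0' hφ] using h1 φ hφ
    exact ⟨extend hρ 0 hρ0', extend hPbern 0 hP0, 0, extend hf 0 hf0⟩
  · have hρ0' : EqOn ρ 0 (Ioo 0 π) := fun φ hφ ↦
      (mul_eq_zero.mp (h3 φ hφ)).resolve_left (hfne φ hφ)
    have hP0 : EqOn Pbern 0 (Ioo 0 π) := fun φ hφ ↦
      (mul_eq_zero.mp (h4 φ hφ)).resolve_left (hfne φ hφ)
    obtain ⟨C, hC⟩ := exists_eqOn_Icc_const_of_deriv_eq_zero pi_pos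
      hfd.continuous.continuousOn hfd.differentiableOn
      fun φ hφ ↦ (mul_eq_zero.mp (hff' φ hφ)).resolve_left (hfne φ hφ)
    exact ⟨extend hρ 0 hρ0', extend hPbern 0 hP0, C, hC⟩

/-- Scale-invariant Boussinesq rigidity (`α = 1`): if `f, Pbern, ρ` are `C¹` on `[0,π]`
and satisfy `2Pbern = 3 sin φ ρ`, `-ff' + Pbern' = sin φ ρ'`, `fρ = 0`, `fPbern = 0` on `(0,π)`,
with `ρ(0) = ρ(π) = 0`, then `ρ ≡ 0`, `Pbern ≡ 0`, and `f` is constant. -/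
theorem scale_invariant_rigidity (f Pbern ρ : ℝ → ℝ)
    (hf : ContDiff ℝ 1 f) (hPbern : ContDiff ℝ 1 Pbern) (hρ : ContDiff ℝ 1 ρ)
    (h1 : ∀ φ ∈ Set.Ioo (0:ℝ) Real.pi, 2 * Pbern φ = 3 * Real.sin φ * ρ φ)
    (h2 : ∀ φ ∈ Set.Ioo (0:ℝ) Real.pi,
      -(f φ * deriv f φ) + deriv Pbern φ = Real.sin φ * deriv ρ φ)
    (h3 : ∀ φ ∈ Set.Ioo (0:ℝ) Real.pi, f φ * ρ φ = 0)
    (h4 : ∀ φ ∈ Set.Ioo (0:ℝ) Real.pi, f φ * Pbern φ = 0)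
    (hρ0 : ρ 0 = 0) (hρπ : ρ Real.pi = 0) :
    (∀ φ ∈ Set.Icc (0:ℝ) Real.pi, ρ φ = 0) ∧
    (∀ φ ∈ Set.Icc (0:ℝ) Real.pi, Pbern φ = 0) ∧
    (∃ C : ℝ, ∀ φ ∈ Set.Icc (0:ℝ) Real.pi, f φ = C) :=
  scale_invariant_rigidity_general f Pbern ρ hf hPbern hρ h1 h2 h3 h4 hρ0
end
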